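/- Suppose the filtration (F_t)_{t∈[0,T]} supports a Brownian motion W, i.e., W is an (F_t)-adapted process with a.s. continuous paths, W_0 = 0, and for all 0 ≤ s ≤ t ≤ T the increment W_t − W_s is independent of F_s and has Gaussian law with mean 0 and variance t − s. Let g : ℝ → ℝ be twice continuously differentiable and ξ = g(W_T). Then there exists a progressively measurable process β with ∫₀^T β_u² du < ∞ a.s. and ∫₀^T β_u du = ξ a.s. if and only if g is constant. -/

import Mathlib

open MeasureTheory ProbabilityTheory Filter Set
open scoped ENNReal Topology

/-- `β ∈ B^{2,0}(ξ)` : `β` is progressively measurable, `∫₀^T β_u² du < ∞` a.s.,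
and `∫₀^T β_u du = ξ` almost surely. -/
def MemB20 {Ω : Type*} {mΩ : MeasurableSpace Ω} (μ : Measure Ω) (ℱ : Filtration ℝ mΩ)
    (T : ℝ) (ξ : Ω → ℝ) (β : ℝ → Ω → ℝ) : Prop :=
  ProgMeasurable ℱ β ∧
  (∀ᵐ ω ∂μ, (∫⁻ u in Set.Ioc (0:ℝ) T, ENNReal.ofReal ((β u ω)^2)) < ⊤) ∧
  ∀ᵐ ω ∂μ, ∫ u in Set.Ioc (0:ℝ) T, β u ω = ξ ω

/-!
Suppose `β ∈ B^{2,0}(g(W_T))` and `g' ≥ 4λ > 0` near some `x₀`. The process `Y_t = ∫₀^t β` is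
adapted, and by Cauchy–Schwarz `|g(W_T) - Y_t| ≤ λ √(T - t)` outside the event
`{∫_t^T β² > λ²}`, whose probability tends to `0` as `t → T`.

On the other hand `g(W_T)` cannot be predicted that well from `ℱ_t`. Put `s = √(T - t)`. On
`{W_t ≈ x₀}` the increment `W_T - W_t ~ N(0, s²)`, independent of `ℱ_t`, falls into `[-s, s]`
and into `[2s, 3s]` with probabilities that do not depend on `t`, and the value of `g(W_T)` in
the second case exceeds the one in the first by at least `4λs`. Hence `|g(W_T) - Y_t| > λs`
with probability bounded below uniformly in `t`, a contradiction. So `g' ≤ 0`, and by symmetry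
`g' = 0`.
-/

open scoped NNReal Real

section Gaussian

lemma exists_forall_le_gaussianReal_Icc {a b : ℝ} (hab : a < b) {v₀ V : ℝ≥0} (hv₀ : 0 < v₀)
    (hv₀V : v₀ ≤ V) :
    ∃ c : ℝ≥0∞, c ≠ 0 ∧ ∀ v : ℝ≥0, v₀ ≤ v → v ≤ V → c ≤ gaussianReal 0 v (Icc a b) := by
  have hV : (0 : ℝ) < V := hv₀.trans_le hv₀V
  -- a lower bound for the density on `[a, b]`, uniform in the variance `v ∈ [v₀, V]`
  refine ⟨ENNReal.ofReal ((b - a) * ((√(2 * π * V))⁻¹ * Real.exp (-(a ^ 2 + b ^ 2) / (2 * v₀)))),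
    by simp only [ne_eq, ENNReal.ofReal_eq_zero, not_le]; have := sub_pos.2 hab; positivity,
    fun v hv hvV => ?_⟩
  rw [gaussianReal_of_var_ne_zero _ (hv₀.trans_le hv).ne', withDensity_apply _ measurableSet_Icc,
    ENNReal.ofReal_mul (sub_nonneg.2 hab.le), ← Real.volume_Icc, mul_comm, ← setLIntegral_const]
  refine setLIntegral_mono (measurable_gaussianPDF 0 v) fun x hx => ENNReal.ofReal_le_ofReal ?_
  have hx2 : x ^ 2 ≤ a ^ 2 + b ^ 2 := by rcases le_total 0 x with h | h <;> nlinarith [hx.1, hx.2]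
  have hv₀' : (0 : ℝ) < v₀ := hv₀
  have hv' : (v₀ : ℝ) ≤ v := hv
  have hv_pos : (0 : ℝ) < v := hv₀'.trans_le hv'
  rw [gaussianPDFReal, sub_zero]
  refine mul_le_mul ?_ (Real.exp_le_exp.2 ?_) (by positivity) (by positivity)
  · gcongr
  · rw [neg_div, neg_div, neg_le_neg_iff]
    gcongr

lemma gaussianReal_Icc_mul {s : ℝ} (hs : 0 < s) (a b : ℝ) :
    gaussianReal 0 (s ^ 2).toNNReal (Icc (s * a) (s * b)) = gaussianReal 0 1 (Icc a b) := by
  have h := gaussianReal_map_const_mul (μ := 0) (v := 1) s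
  rw [mul_zero, mul_one, ← Real.toNNReal_of_nonneg (sq_nonneg s)] at h
  rw [← h, Measure.map_apply (measurable_const_mul s) measurableSet_Icc,
    preimage_const_mul_Icc₀ _ _ hs, mul_div_cancel_left₀ _ hs.ne', mul_div_cancel_left₀ _ hs.ne']

lemma gaussianReal_Icc_ne_zero {m : ℝ} {v : ℝ≥0} (hv : v ≠ 0) {a b : ℝ} (hab : a < b) :
    gaussianReal m v (Icc a b) ≠ 0 := fun h =>
  (not_le.2 hab) (by simpa using gaussianReal_absolutelyContinuous' m hv h)

end Gaussian

section Integrals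

variable {α : Type*} {mα : MeasurableSpace α} {ν : Measure α}

lemma integrable_sq_of_lintegral_ne_top {f : α → ℝ} (hf : AEStronglyMeasurable f ν)
    (h : ∫⁻ x, ENNReal.ofReal (f x ^ 2) ∂ν ≠ ∞) : Integrable (fun x => f x ^ 2) ν :=
  ⟨hf.pow 2, (hasFiniteIntegral_iff_ofReal (ae_of_all _ fun x => sq_nonneg (f x))).2 h.lt_top⟩

lemma abs_integral_le_of_lintegral_sq_le [IsFiniteMeasure ν] {f : α → ℝ}
    (hf : AEStronglyMeasurable f ν) {c : ℝ} (hc : 0 ≤ c)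
    (h : ∫⁻ x, ENNReal.ofReal (f x ^ 2) ∂ν ≤ ENNReal.ofReal (c ^ 2)) :
    |∫ x, f x ∂ν| ≤ c * √(ν.real univ) := by
  have hL2 : MemLp f 2 ν := (memLp_two_iff_integrable_sq hf).2
    (integrable_sq_of_lintegral_ne_top hf (ne_top_of_le_ne_top ENNReal.ofReal_ne_top h))
  have hsq_le : ∫ x, f x ^ 2 ∂ν ≤ c ^ 2 := by
    rw [integral_eq_lintegral_of_nonneg_ae (ae_of_all _ fun x => sq_nonneg (f x)) (hf.pow 2)]
    exact ENNReal.toReal_le_of_le_ofReal (sq_nonneg c) h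
  have holder := integral_mul_le_Lp_mul_Lq_of_nonneg Real.HolderConjugate.two_two
    (ae_of_all _ fun x => abs_nonneg (f x)) (ae_of_all _ fun _ => zero_le_one)
    (by rw [ENNReal.ofReal_ofNat]; exact hL2.abs) (by simpa using memLp_const (1 : ℝ))
  simp only [one_pow, mul_one, integral_const, smul_eq_mul, ← Real.sqrt_eq_rpow,
    Real.rpow_two, sq_abs] at holder
  calc |∫ x, f x ∂ν| ≤ ∫ x, |f x| ∂ν := abs_integral_le_integral_abs
    _ ≤ √(∫ x, f x ^ 2 ∂ν) * √(ν.real univ) := holder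
    _ ≤ c * √(ν.real univ) := by gcongr; exact (Real.sqrt_le_left hc).2 hsq_le

lemma abs_setIntegral_Ioc_sub_le {b : ℝ → ℝ} {a t c lam : ℝ}
    (hb : AEStronglyMeasurable b (volume.restrict (Ioc a c)))
    (hfin : ∫⁻ u in Ioc a c, ENNReal.ofReal (b u ^ 2) ≠ ∞) (hat : a ≤ t) (htc : t ≤ c)
    (hlam : 0 ≤ lam)
    (htail : ∫⁻ u in Ioc t c, ENNReal.ofReal (b u ^ 2) ≤ ENNReal.ofReal (lam ^ 2)) :
    |(∫ u in Ioc a c, b u) - ∫ u in Ioc a t, b u| ≤ lam * √(c - t) := by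
  have hint : IntegrableOn b (Ioc a c) :=
    ((memLp_two_iff_integrable_sq hb).2 (integrable_sq_of_lintegral_ne_top hb hfin)).integrable
      one_le_two
  have hsplit := setIntegral_union (Ioc_disjoint_Ioc_of_le le_rfl) measurableSet_Ioc
    (hint.mono_set (Ioc_subset_Ioc_right htc)) (hint.mono_set (Ioc_subset_Ioc_left hat))
  rw [Ioc_union_Ioc_eq_Ioc hat htc] at hsplit
  rw [hsplit, add_sub_cancel_left]
  simpa [Real.volume_real_Ioc_of_le htc] using abs_integral_le_of_lintegral_sq_le
    (hb.mono_set (Ioc_subset_Ioc_left hat)) hlam htail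

lemma tendsto_setLIntegral_Ioc_left {f : ℝ → ℝ≥0∞} {a b : ℝ} (hab : a < b)
    (h : ∫⁻ u in Ioc a b, f u ≠ ∞) :
    Tendsto (fun t => ∫⁻ u in Ioc t b, f u) (𝓝[<] b) (𝓝 0) := by
  have hvol : Tendsto (fun t => volume.restrict (Ioc a b) (Ioc t b)) (𝓝[<] b) (𝓝 0) := by
    refine tendsto_of_tendsto_of_tendsto_of_le_of_le tendsto_const_nhds ?_ (fun _ => bot_le)
      fun t => Measure.restrict_apply_le _ _
    simp only [Real.volume_Ioc]
    rw [← ENNReal.ofReal_zero, ← sub_self b]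
    exact ENNReal.tendsto_ofReal ((tendsto_const_nhds.sub tendsto_id).mono_left nhdsWithin_le_nhds)
  refine (tendsto_setLIntegral_zero h hvol).congr' ?_
  filter_upwards [Ioo_mem_nhdsLT hab] with t ht
  rw [Measure.restrict_restrict measurableSet_Ioc, Ioc_inter_Ioc, max_eq_left ht.1.le, min_self]

lemma tendsto_measure_lt_of_ae_tendsto_zero {ι : Type*} [IsFiniteMeasure ν] {l : Filter ι}
    [l.IsCountablyGenerated] {X : ι → α → ℝ≥0∞} (hX : ∀ i, Measurable (X i))
    (hlim : ∀ᵐ x ∂ν, Tendsto (X · x) l (𝓝 0)) {η : ℝ≥0∞} (hη : η ≠ 0) :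
    Tendsto (fun i => ν {x | η < X i x}) l (𝓝 0) := by
  have hmeas : ∀ i, MeasurableSet {x | η < X i x} := fun i =>
    measurableSet_lt measurable_const (hX i)
  have := tendsto_lintegral_filter_of_dominated_convergence (μ := ν) (l := l)
    (F := fun i => {x | η < X i x}.indicator 1) (f := 0) 1
    (Eventually.of_forall fun i => measurable_one.indicator (hmeas i))
    (Eventually.of_forall fun i => ae_of_all _ fun x => indicator_le_self' (fun _ _ => bot_le) x)
    (by simp) ?_
  · simpa [lintegral_indicator_one (hmeas _)] using this
  filter_upwards [hlim] with x hx
  refine tendsto_const_nhds.congr' ?_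
  filter_upwards [hx.eventually (gt_mem_nhds (pos_iff_ne_zero.2 hη))] with i hi
  exact (indicator_of_notMem (show x ∉ {x | η < X i x} from not_lt.2 hi.le) _).symm

end Integrals

namespace MeasureTheory.IsStronglyProgressive

variable {Ω : Type*} {mΩ : MeasurableSpace Ω} {ℱ : Filtration ℝ mΩ} {β : ℝ → Ω → ℝ}
  {s : Set ℝ} {t : ℝ}

lemma stronglyMeasurable_min (hβ : IsStronglyProgressive ℱ β) (t : ℝ) {m : MeasurableSpace Ω}
    (hm : ℱ t ≤ m) :
    StronglyMeasurable[m.prod Real.measurableSpace] fun p : Ω × ℝ => β (min p.2 t) p.1 :=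
  (hβ t).comp_measurable
    (g := fun p : Ω × ℝ => ((⟨min p.2 t, mem_Iic.2 (min_le_right _ _)⟩ : Iic t), p.1))
    ((measurable_snd.min measurable_const).subtype_mk.prodMk (measurable_fst.mono le_rfl hm))

lemma aestronglyMeasurable_restrict (hβ : IsStronglyProgressive ℱ β) (hs : MeasurableSet s)
    (hst : s ⊆ Iic t) (ω : Ω) : AEStronglyMeasurable (fun u => β u ω) (volume.restrict s) := by
  refine ((hβ.stronglyMeasurable_min t (ℱ.le t)).comp_measurable
    (measurable_const.prodMk measurable_id (f := fun _ : ℝ => ω))).aestronglyMeasurable.congr ?_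
  filter_upwards [ae_restrict_mem hs] with u hu
  simp [min_eq_left (mem_Iic.1 (hst hu))]

lemma stronglyMeasurable_setIntegral (hβ : IsStronglyProgressive ℱ β) (hs : MeasurableSet s)
    (hst : s ⊆ Iic t) : StronglyMeasurable[ℱ t] fun ω => ∫ u in s, β u ω := by
  let _ := ℱ t
  have h := (hβ.stronglyMeasurable_min t le_rfl).integral_prod_right' (ν := volume.restrict s)
  convert h using 2 with ω
  exact setIntegral_congr_fun hs fun u hu => by simp [min_eq_left (mem_Iic.1 (hst hu))]

lemma measurable_setLIntegral_sq (hβ : IsStronglyProgressive ℱ β) (hs : MeasurableSet s)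
    (hst : s ⊆ Iic t) : Measurable fun ω => ∫⁻ u in s, ENNReal.ofReal (β u ω ^ 2) := by
  have h := (((hβ.stronglyMeasurable_min t (ℱ.le t)).measurable.pow_const 2).ennreal_ofReal
    ).lintegral_prod_right' (ν := volume.restrict s)
  convert h using 2 with ω
  exact setLIntegral_congr_fun hs fun u hu => by simp [min_eq_left (mem_Iic.1 (hst hu))]

end MeasureTheory.IsStronglyProgressive

namespace MemB20

variable {Ω : Type*} {mΩ : MeasurableSpace Ω} {μ : Measure Ω} {ℱ : Filtration ℝ mΩ} {T : ℝ}
  {ξ : Ω → ℝ} {β : ℝ → Ω → ℝ}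

lemma neg (hβ : MemB20 μ ℱ T ξ β) : MemB20 μ ℱ T (fun ω => -ξ ω) (fun u ω => -β u ω) := by
  obtain ⟨hprog, hfin, hrep⟩ := hβ
  refine ⟨IsStronglyProgressive.neg hprog, ?_, ?_⟩
  · simpa only [neg_sq] using hfin
  · filter_upwards [hrep] with ω hω
    rw [integral_neg, hω]

lemma measure_lt_abs_sub_le (hβ : MemB20 μ ℱ T ξ β) {t lam : ℝ} (ht : 0 ≤ t) (htT : t ≤ T)
    (hlam : 0 ≤ lam) :
    μ {ω | lam * √(T - t) < |ξ ω - ∫ u in Ioc 0 t, β u ω|} ≤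
      μ {ω | ENNReal.ofReal (lam ^ 2) < ∫⁻ u in Ioc t T, ENNReal.ofReal (β u ω ^ 2)} := by
  refine measure_mono_ae ?_
  filter_upwards [hβ.2.1, hβ.2.2] with ω hfin hrep (hω : lam * √(T - t) < |ξ ω - _|)
  by_contra htail
  rw [← hrep] at hω
  exact hω.not_ge (abs_setIntegral_Ioc_sub_le (IsStronglyProgressive.aestronglyMeasurable_restrict
    hβ.1 measurableSet_Ioc Ioc_subset_Iic_self ω) hfin.ne ht htT hlam (not_lt.1 htail))

end MemB20

lemma memB20_const {Ω : Type*} {mΩ : MeasurableSpace Ω} (μ : Measure Ω) (ℱ : Filtration ℝ mΩ)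
    {T : ℝ} (hT : 0 < T) (a : ℝ) : MemB20 μ ℱ T (fun _ => a) (fun _ _ => a / T) := by
  refine ⟨isStronglyProgressive_const _ _, ae_of_all _ fun ω => ?_, ae_of_all _ fun ω => ?_⟩
  · simp [Real.volume_Ioc, ENNReal.mul_lt_top]
  · simp only [integral_const, measureReal_restrict_apply_univ, Real.volume_real_Ioc_of_le hT.le,
      sub_zero, smul_eq_mul]
    field_simp

section Prediction

variable {Ω : Type*} {m mΩ : MeasurableSpace Ω} {μ : Measure Ω} [IsProbabilityMeasure μ]

lemma mul_mul_le_two_mul_of_subset {G F₁ F₂ S B : Set Ω} (h₁ : μ (G ∩ F₁) = μ G * μ F₁)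
    (h₂ : μ (S ∩ F₂) = μ S * μ F₂) (hGF₁ : G ∩ F₁ ⊆ S ∪ B) (hSF₂ : S ∩ F₂ ⊆ B) :
    μ G * μ F₁ * μ F₂ ≤ 2 * μ B :=
  calc μ G * μ F₁ * μ F₂ = μ (G ∩ F₁) * μ F₂ := by rw [h₁]
    _ ≤ (μ S + μ B) * μ F₂ := by gcongr; exact (measure_mono hGF₁).trans (measure_union_le _ _)
    _ = μ (S ∩ F₂) + μ B * μ F₂ := by rw [add_mul, h₂]
    _ ≤ μ B + μ B * 1 := by gcongr; exact prob_le_one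
    _ = 2 * μ B := by rw [mul_one, two_mul]

lemma measure_preimage_Icc_mul_le_two_mul {w X Y : Ω → ℝ} (hw : Measurable[m] w)
    (hY : Measurable[m] Y) (hXm : Measurable X)
    (hX : Indep (MeasurableSpace.comap X Real.measurableSpace) m μ) {s : ℝ} (hs : 0 < s)
    (hXlaw : μ.map X = gaussianReal 0 (s ^ 2).toNNReal) {g : ℝ → ℝ} (hg : Differentiable ℝ g)
    {a b lam : ℝ} (hlam : 0 < lam) (hg' : ∀ x ∈ Icc (a - s) (b + s * 3), 4 * lam ≤ deriv g x) :
    μ (w ⁻¹' Icc a b) * gaussianReal 0 1 (Icc (-1) 1) * gaussianReal 0 1 (Icc 2 3) ≤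
      2 * μ {ω | lam * s < |g (w ω + X ω) - Y ω|} := by
  set G := w ⁻¹' Icc a b
  set B := {ω | lam * s < |g (w ω + X ω) - Y ω|}
  -- outside `B`, a small increment `X ∈ [-s, s]` forces `S`, a large one `X ∈ [2s, 3s]` forbids it
  set S := G ∩ {ω | Y ω ≤ g (w ω + s) + lam * s}
  set F : ℝ → ℝ → Set Ω := fun c d => X ⁻¹' Icc (s * c) (s * d)
  have hF : ∀ c d, μ (F c d) = gaussianReal 0 1 (Icc c d) := fun c d => by
    rw [← Measure.map_apply hXm measurableSet_Icc, hXlaw, gaussianReal_Icc_mul hs]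
  have hindep : ∀ A c d, MeasurableSet[m] A → μ (A ∩ F c d) = μ A * μ (F c d) := fun A c d hA => by
    rw [inter_comm, mul_comm,
      (hX.indepSet_of_measurableSet ⟨_, measurableSet_Icc, rfl⟩ hA).measure_inter_eq_mul]
  have hexp : ∀ x ∈ Icc (a - s) (b + s * 3), ∀ y ∈ Icc (a - s) (b + s * 3), x ≤ y →
      4 * lam * (y - x) ≤ g y - g x :=
    (convex_Icc _ _).mul_sub_le_image_sub_of_le_deriv hg.continuous.continuousOn
      hg.differentiableOn fun x hx => hg' x (interior_subset hx)
  have hGF₁ : G ∩ F (-1) 1 ⊆ S ∪ B := by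
    rintro ω ⟨hωG, hωF⟩
    refine or_iff_not_imp_right.2 fun hωB => ⟨hωG, ?_⟩
    simp only [B, G, F, mem_preimage, mem_Icc, mem_ofPred_eq, not_lt, abs_le] at hωG hωF hωB ⊢
    have := hexp (w ω + X ω) ⟨by linarith, by linarith⟩ (w ω + s) ⟨by linarith, by linarith⟩
      (by linarith)
    nlinarith
  have hSF₂ : S ∩ F 2 3 ⊆ B := by
    rintro ω ⟨⟨hωG, hωS⟩, hωF⟩
    by_contra hωB
    simp only [B, G, F, mem_preimage, mem_Icc, mem_ofPred_eq, not_lt, abs_le] at hωG hωS hωF hωB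
    have := hexp (w ω + s) ⟨by linarith, by linarith⟩ (w ω + X ω) ⟨by linarith, by linarith⟩
      (by linarith)
    nlinarith
  have hS : MeasurableSet[m] S := (hw measurableSet_Icc).inter
    (measurableSet_le hY ((hg.continuous.measurable.comp (hw.add_const s)).add_const _))
  rw [← hF, ← hF]
  exact mul_mul_le_two_mul_of_subset (hindep _ _ _ (hw measurableSet_Icc)) (hindep _ _ _ hS)
    hGF₁ hSF₂

end Prediction

structure HasIndepGaussianIncrements {Ω : Type*} {mΩ : MeasurableSpace Ω} (μ : Measure Ω)
    (ℱ : Filtration ℝ mΩ) (T : ℝ) (W : ℝ → Ω → ℝ) : Prop where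
  adapted : Adapted ℱ W
  ae_zero : ∀ᵐ ω ∂μ, W 0 ω = 0
  indep : ∀ s t : ℝ, 0 ≤ s → s ≤ t → t ≤ T →
    Indep (MeasurableSpace.comap (fun ω => W t ω - W s ω) Real.measurableSpace) (ℱ s) μ
  map_sub : ∀ s t : ℝ, 0 ≤ s → s ≤ t → t ≤ T →
    Measure.map (fun ω => W t ω - W s ω) μ = gaussianReal 0 (Real.toNNReal (t - s))

namespace HasIndepGaussianIncrements

variable {Ω : Type*} {mΩ : MeasurableSpace Ω} {μ : Measure Ω} {ℱ : Filtration ℝ mΩ} {T : ℝ}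
  {W : ℝ → Ω → ℝ}

lemma map_eq_gaussianReal (hW : HasIndepGaussianIncrements μ ℱ T W) {t : ℝ} (ht : 0 ≤ t)
    (htT : t ≤ T) : μ.map (W t) = gaussianReal 0 t.toNNReal := by
  rw [← sub_zero t, ← hW.map_sub 0 t le_rfl ht htT]
  refine Measure.map_congr ?_
  filter_upwards [hW.ae_zero] with ω hω
  simp [hω]

lemma measure_preimage_Icc_mul_le_two_mul_measure_tail [IsProbabilityMeasure μ]
    (hW : HasIndepGaussianIncrements μ ℱ T W)
    {g : ℝ → ℝ} (hg : Differentiable ℝ g) {β : ℝ → Ω → ℝ}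
    (hβ : MemB20 μ ℱ T (fun ω => g (W T ω)) β) {t a b lam : ℝ} (ht : 0 ≤ t) (htT : t < T)
    (hlam : 0 < lam)
    (hg' : ∀ x ∈ Icc (a - √(T - t)) (b + √(T - t) * 3), 4 * lam ≤ deriv g x) :
    μ (W t ⁻¹' Icc a b) * gaussianReal 0 1 (Icc (-1) 1) * gaussianReal 0 1 (Icc 2 3) ≤
      2 * μ {ω | ENNReal.ofReal (lam ^ 2) < ∫⁻ u in Ioc t T, ENNReal.ofReal (β u ω ^ 2)} := by
  have hWm : ∀ t, Measurable (W t) := fun t => (hW.adapted t).mono (ℱ.le t) le_rfl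
  have hlaw := hW.map_sub t T ht htT.le le_rfl
  rw [← Real.sq_sqrt (sub_nonneg.2 htT.le)] at hlaw
  calc _ ≤ 2 * μ {ω | lam * √(T - t) <
          |g (W t ω + (W T ω - W t ω)) - ∫ u in Ioc 0 t, β u ω|} :=
        measure_preimage_Icc_mul_le_two_mul (hW.adapted t)
          (IsStronglyProgressive.stronglyMeasurable_setIntegral hβ.1 measurableSet_Ioc
            Ioc_subset_Iic_self).measurable
          ((hWm T).sub (hWm t)) (hW.indep t T ht htT.le le_rfl)
          (Real.sqrt_pos.2 (sub_pos.2 htT)) hlaw hg hlam hg'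
    _ ≤ _ := by
        gcongr 2 * ?_
        simpa only [add_sub_cancel] using hβ.measure_lt_abs_sub_le ht htT.le hlam.le

lemma exists_forall_le_measure_preimage_Icc (hW : HasIndepGaussianIncrements μ ℱ T W)
    (hT : 0 < T) {a b : ℝ} (hab : a < b) :
    ∃ c : ℝ≥0∞, c ≠ 0 ∧ ∀ t ∈ Icc (T / 2) T, c ≤ μ (W t ⁻¹' Icc a b) := by
  obtain ⟨c, hc0, hc⟩ := exists_forall_le_gaussianReal_Icc hab (v₀ := (T / 2).toNNReal)
    (V := T.toNNReal) (by simpa using hT) (Real.toNNReal_le_toNNReal (by linarith))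
  refine ⟨c, hc0, fun t ht => ?_⟩
  rw [← Measure.map_apply ((hW.adapted t).mono (ℱ.le t) le_rfl) measurableSet_Icc,
    hW.map_eq_gaussianReal (by linarith [ht.1]) ht.2]
  exact hc _ (Real.toNNReal_le_toNNReal ht.1) (Real.toNNReal_le_toNNReal ht.2)

lemma deriv_nonpos_of_memB20 [IsProbabilityMeasure μ] (hW : HasIndepGaussianIncrements μ ℱ T W)
    (hT : 0 < T) {g : ℝ → ℝ} (hg : ContDiff ℝ 1 g) {β : ℝ → Ω → ℝ}
    (hβ : MemB20 μ ℱ T (fun ω => g (W T ω)) β) (x₀ : ℝ) : deriv g x₀ ≤ 0 := by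
  by_contra! hx₀
  obtain ⟨lam, hlam, hlam'⟩ : ∃ lam > 0, 4 * lam < deriv g x₀ :=
    ⟨deriv g x₀ / 8, by positivity, by linarith⟩
  obtain ⟨r, hr, hgr⟩ := Metric.nhds_basis_closedBall.eventually_iff.1 <|
    (hg.continuous_deriv le_rfl).continuousAt.eventually (lt_mem_nhds hlam')
  obtain ⟨c, hc0, hc⟩ :=
    hW.exists_forall_le_measure_preimage_Icc hT (a := x₀ - r / 2) (b := x₀ + r / 2) (by linarith)
  set p := gaussianReal 0 1 (Icc (-1) 1) * gaussianReal 0 1 (Icc 2 3)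
  have hp : p ≠ 0 := mul_ne_zero (gaussianReal_Icc_ne_zero one_ne_zero (by norm_num))
    (gaussianReal_Icc_ne_zero one_ne_zero (by norm_num))
  set E := fun t => {ω | ENNReal.ofReal (lam ^ 2) < ∫⁻ u in Ioc t T, ENNReal.ofReal (β u ω ^ 2)}
  have hE : Tendsto (fun t => 2 * μ (E t)) (𝓝[<] T) (𝓝 0) := by
    have hE₁ : Tendsto (fun t => μ (E t)) (𝓝[<] T) (𝓝 0) :=
      tendsto_measure_lt_of_ae_tendsto_zero
        (fun t => IsStronglyProgressive.measurable_setLIntegral_sq hβ.1 measurableSet_Ioc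
          Ioc_subset_Iic_self)
        (hβ.2.1.mono fun ω hω => tendsto_setLIntegral_Ioc_left hT hω.ne) (by positivity)
    simpa only [mul_zero] using ENNReal.Tendsto.const_mul (a := 2) hE₁ (Or.inr ENNReal.ofNat_ne_top)
  have hs : Tendsto (fun t => √(T - t)) (𝓝[<] T) (𝓝 0) :=
    ((continuous_const.sub continuous_id).sqrt.tendsto' T 0 (by simp)).mono_left
      nhdsWithin_le_nhds
  have hbound : ∀ᶠ t in 𝓝[<] T, c * p ≤ 2 * μ (E t) := by
    filter_upwards [Ioo_mem_nhdsLT (by linarith : T / 2 < T),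
      hs.eventually (ge_mem_nhds (by positivity : (0 : ℝ) < r / 6))] with t ht hts
    calc c * p ≤ μ (W t ⁻¹' Icc (x₀ - r / 2) (x₀ + r / 2)) * p := by
          gcongr; exact hc t ⟨ht.1.le, ht.2.le⟩
      _ ≤ 2 * μ (E t) := by
          rw [← mul_assoc]
          refine hW.measure_preimage_Icc_mul_le_two_mul_measure_tail
            (hg.differentiable one_ne_zero) hβ (by linarith [ht.1]) ht.2 hlam fun x hx => ?_
          refine (@hgr x ?_).le
          rw [Real.closedBall_eq_Icc]
          exact ⟨by linarith [hx.1], by linarith [hx.2]⟩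
  exact mul_ne_zero hc0 hp (le_zero_iff.1 (ge_of_tendsto hE hbound))

end HasIndepGaussianIncrements

theorem stmt7_general
    {Ω : Type*} {mΩ : MeasurableSpace Ω} (μ : Measure Ω) [IsProbabilityMeasure μ]
    (ℱ : Filtration ℝ mΩ) (T : ℝ) (hT : 0 < T)
    -- the filtration supports a Brownian motion `W`:
    (W : ℝ → Ω → ℝ) (hW_adapted : Adapted ℱ W)
    (hW_zero : ∀ᵐ ω ∂μ, W 0 ω = 0)
    (hW_indep : ∀ s t : ℝ, 0 ≤ s → s ≤ t → t ≤ T →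
      Indep (MeasurableSpace.comap (fun ω => W t ω - W s ω) Real.measurableSpace) (ℱ s) μ)
    (hW_gauss : ∀ s t : ℝ, 0 ≤ s → s ≤ t → t ≤ T →
      Measure.map (fun ω => W t ω - W s ω) μ = gaussianReal 0 (Real.toNNReal (t - s)))
    (g : ℝ → ℝ) (hg : ContDiff ℝ 2 g) :
    (∃ β, MemB20 μ ℱ T (fun ω => g (W T ω)) β) ↔ ∃ a : ℝ, ∀ x : ℝ, g x = a := by
  have hW : HasIndepGaussianIncrements μ ℱ T W := ⟨hW_adapted, hW_zero, hW_indep, hW_gauss⟩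
  have hg₁ : ContDiff ℝ 1 g := hg.of_le one_le_two
  constructor
  · rintro ⟨β, hβ⟩
    have hderiv : ∀ x, deriv g x = 0 := fun x => le_antisymm
      (hW.deriv_nonpos_of_memB20 hT hg₁ hβ x)
      (by simpa using hW.deriv_nonpos_of_memB20 hT hg₁.neg hβ.neg x)
    exact ⟨g 0, fun x => is_const_of_deriv_eq_zero (hg₁.differentiable one_ne_zero) hderiv x 0⟩
  · rintro ⟨a, ha⟩
    exact ⟨_, by simpa only [ha] using memB20_const μ ℱ hT a⟩

theorem stmt7
    {Ω : Type*} {mΩ : MeasurableSpace Ω} (μ : Measure Ω) [IsProbabilityMeasure μ]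
    (ℱ : Filtration ℝ mΩ) (T : ℝ) (hT : 0 < T)
    -- the filtration supports a Brownian motion `W`:
    (W : ℝ → Ω → ℝ) (hW_adapted : Adapted ℱ W)
    (hW_cont : ∀ᵐ ω ∂μ, ContinuousOn (fun t => W t ω) (Icc 0 T))
    (hW_zero : ∀ᵐ ω ∂μ, W 0 ω = 0)
    (hW_indep : ∀ s t : ℝ, 0 ≤ s → s ≤ t → t ≤ T →
      Indep (MeasurableSpace.comap (fun ω => W t ω - W s ω) Real.measurableSpace) (ℱ s) μ)
    (hW_gauss : ∀ s t : ℝ, 0 ≤ s → s ≤ t → t ≤ T →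
      Measure.map (fun ω => W t ω - W s ω) μ = gaussianReal 0 (Real.toNNReal (t - s)))
    (g : ℝ → ℝ) (hg : ContDiff ℝ 2 g) :
    (∃ β, MemB20 μ ℱ T (fun ω => g (W T ω)) β) ↔ ∃ a : ℝ, ∀ x : ℝ, g x = a :=
  stmt7_general μ ℱ T hT W hW_adapted hW_zero hW_indep hW_gauss g hg
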